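/- arXiv:2207.09544 — 2 statements merged into one kernel-verified Lean document; each statement's English description precedes it below -/
import Mathlib

section
/- Let E be a real inner product space, X ⊆ E a nonempty convex set, d : E → ℝ a convex Fréchet-differentiable function with Bregman divergence V(y,x) := d(y) − d(x) − ⟨∇d(x), y − x⟩, μ > 0, and g : E → E a μ-relatively strongly monotone operator on X with z* ∈ X a solution of the Minty variational inequality. Let L > 0, δ ≥ 0, and z, w, z⁺ ∈ X be such that: (i) w minimizes y ↦ ⟨(1/L)·g(z), y⟩ + V(y, z) over X; (ii) z⁺ minimizes u ↦ ⟨(1/L)·g(w), u⟩ + V(u, z) + (μ/L)·V(u, w) over X; (iii) ⟨g(z) − g(w), z⁺ − w⟩ ≤ L·( V(w, z) + V(z⁺, w) ) + δ. Then V(z*, z⁺) ≤ (1 + μ/L)^{−1}·V(z*, z) + δ/(L + μ). -/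
/-!
The optimality conditions of the two prox steps, rewritten with the three-point identity
`⟪∇d q - ∇d r, p - q⟫ = V(p, r) - V(q, r) - V(p, q)`, are two inequalities between Bregman
divergences. Adding them to the line-search condition and to `μ V(z*, w) ≤ ⟪g w, w - z*⟫`
(Minty plus relative strong monotonicity) leaves
`(L + μ) V(z*, z⁺) ≤ L V(z*, z) + δ - μ V(z⁺, w)`.
-/

open scoped RealInnerProductSpace
open Set Filter Topology AffineMap

section

variable {E : Type*} [NormedAddCommGroup E] [InnerProductSpace ℝ E]

theorem ConvexOn.inner_gradient_le_sub [CompleteSpace E] {f : E → ℝ} {f' x : E}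
    (hf : ConvexOn ℝ univ f) (hx : HasGradientAt f f' x) (y : E) :
    ⟪f', y - x⟫ ≤ f y - f x := by
  have hline : HasDerivAt (f ∘ lineMap (k := ℝ) x y) ⟪f', y - x⟫ 0 := by
    simpa using hx.hasFDerivAt.comp_hasDerivAt_of_eq 0 hasDerivAt_lineMap
      (lineMap_apply_zero x y).symm
  simpa [slope_def_field] using
    (hf.comp_affineMap (lineMap x y)).le_slope_of_hasDerivAt (mem_univ 0) (mem_univ 1) one_pos hline

def bregmanDiv (d : E → ℝ) (Dd : E → E) (y x : E) : ℝ := d y - d x - ⟪Dd x, y - x⟫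

section Bregman

variable {d : E → ℝ} {Dd : E → E}

theorem bregmanDiv_nonneg [CompleteSpace E] (hd : ConvexOn ℝ univ d) {x : E}
    (hx : HasGradientAt d (Dd x) x) (y : E) : 0 ≤ bregmanDiv d Dd y x := by
  unfold bregmanDiv
  linarith [hd.inner_gradient_le_sub hx y]

theorem bregmanDiv_three_point (p q r : E) :
    ⟪Dd q - Dd r, p - q⟫ = bregmanDiv d Dd p r - bregmanDiv d Dd q r - bregmanDiv d Dd p q := by
  simp only [bregmanDiv, inner_sub_left, inner_sub_right]
  ring

theorem hasGradientAt_bregmanDiv_left [CompleteSpace E] {x : E} (hx : HasGradientAt d (Dd x) x)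
    (a : E) :
    HasGradientAt (fun y => bregmanDiv d Dd y a) (Dd x - Dd a) x := by
  rw [hasGradientAt_iff_hasFDerivAt]
  have := (hx.hasFDerivAt.sub_const (d a)).sub
    (((innerSL ℝ (Dd a)).hasFDerivAt).sub_const ⟪Dd a, a⟫)
  refine this.congr_fderiv ?_ |>.congr_of_eventuallyEq ?_
  · ext v; simp
  · filter_upwards with y; simp [bregmanDiv, inner_sub_right]

theorem IsMinOn.bregmanDiv_prox_optimality [CompleteSpace E] {X : Set E} {p a b x y : E} {c : ℝ}
    (hmin : IsMinOn (fun y => ⟪p, y⟫ + bregmanDiv d Dd y a + c * bregmanDiv d Dd y b) X x)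
    (hX : Convex ℝ X) (hx : x ∈ X) (hy : y ∈ X) (hDd : HasGradientAt d (Dd x) x) :
    0 ≤ ⟪p, y - x⟫ + (bregmanDiv d Dd y a - bregmanDiv d Dd x a - bregmanDiv d Dd y x)
      + c * (bregmanDiv d Dd y b - bregmanDiv d Dd x b - bregmanDiv d Dd y x) := by
  have hF := ((innerSL ℝ p).hasFDerivAt.add
    (hasGradientAt_bregmanDiv_left hDd a).hasFDerivAt).add
      ((hasGradientAt_bregmanDiv_left hDd b).hasFDerivAt.const_mul c)
  have := hmin.localize.hasFDerivWithinAt_nonneg hF.hasFDerivWithinAt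
    (sub_mem_posTangentConeAt_of_segment_subset (hX.segment_subset hx hy))
  simpa [← bregmanDiv_three_point, inner_sub_left] using this

theorem mul_bregmanDiv_le_inner_of_minty [CompleteSpace E] {X : Set E} {g : E → E} {μ : ℝ}
    {zs w : E} (hd : ConvexOn ℝ univ d) (hDd : ∀ x, HasGradientAt d (Dd x) x) (hμ : 0 ≤ μ)
    (hX : Convex ℝ X)
    (hmono : ∀ x ∈ X, ∀ y ∈ X,
      μ * (bregmanDiv d Dd y x + bregmanDiv d Dd x y) ≤ ⟪g y - g x, y - x⟫)
    (hzs : zs ∈ X) (hMinty : ∀ x ∈ X, ⟪g x, zs - x⟫ ≤ 0) (hw : w ∈ X) :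
    μ * bregmanDiv d Dd zs w ≤ ⟪g w, w - zs⟫ := by
  -- `g` need not be continuous, so monotonicity is used at interior points of the segment
  -- from `zs` to `w`, and the limit towards `zs` is taken in `d` instead.
  set xt : ℝ → E := ⇑(lineMap (k := ℝ) zs w) with hxt_def
  have hseg : ∀ t ∈ Ioo (0 : ℝ) 1,
      μ * bregmanDiv d Dd (xt t) w ≤ (1 - t) * ⟪g w, w - zs⟫ := by
    intro t ht
    have hxt : xt t ∈ X := hX.lineMap_mem hzs hw (Ioo_subset_Icc_self ht)
    have hminty : 0 ≤ ⟪g (xt t), w - zs⟫ := by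
      have h := hMinty _ hxt
      rw [← vsub_eq_sub, hxt_def, left_vsub_lineMap, vsub_eq_sub, ← neg_sub, smul_neg,
        inner_neg_right, real_inner_smul_right] at h
      nlinarith [ht.1]
    have hmono' := hmono _ hxt w hw
    rw [← vsub_eq_sub w (xt t), hxt_def, right_vsub_lineMap, vsub_eq_sub, real_inner_smul_right,
      inner_sub_left] at hmono'
    nlinarith [bregmanDiv_nonneg hd (hDd (xt t)) w, ht.2]
  have hcont : ContinuousAt (fun t => μ * bregmanDiv d Dd (xt t) w) 0 := by
    have hB : ContinuousAt (fun y => bregmanDiv d Dd y w) (xt 0) := by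
      unfold bregmanDiv
      exact ((hDd _).continuousAt.sub continuousAt_const).sub (by fun_prop)
    exact continuousAt_const.mul (hB.comp lineMap_continuous.continuousAt)
  have hlhs : Tendsto (fun t => μ * bregmanDiv d Dd (xt t) w) (𝓝[>] 0)
      (𝓝 (μ * bregmanDiv d Dd zs w)) := by
    simpa [hxt_def] using hcont.tendsto.mono_left nhdsWithin_le_nhds
  have hrhs : Tendsto (fun t : ℝ => (1 - t) * ⟪g w, w - zs⟫) (𝓝[>] 0)
      (𝓝 ⟪g w, w - zs⟫) := by
    have : Continuous (fun t : ℝ => (1 - t) * ⟪g w, w - zs⟫) := by fun_prop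
    simpa using (this.tendsto 0).mono_left nhdsWithin_le_nhds
  refine le_of_tendsto_of_tendsto hlhs hrhs ?_
  filter_upwards [Ioo_mem_nhdsGT one_pos] with t ht using hseg t ht

end Bregman

end

theorem algorithm3_one_step_contraction_general
    {E : Type*} [NormedAddCommGroup E] [InnerProductSpace ℝ E] [CompleteSpace E]
    (X : Set E) (hXconv : Convex ℝ X)
    (d : E → ℝ) (hdconv : ConvexOn ℝ Set.univ d)
    (Dd : E → E) (hd : ∀ x, HasGradientAt d (Dd x) x)
    (V : E → E → ℝ) (hV : ∀ y x, V y x = d y - d x - ⟪Dd x, y - x⟫)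
    (μ : ℝ) (hμ : 0 < μ) (g : E → E)
    (hmono : ∀ x ∈ X, ∀ y ∈ X, μ * (V y x + V x y) ≤ ⟪g y - g x, y - x⟫)
    (zs : E) (hzs : zs ∈ X) (hMinty : ∀ x ∈ X, ⟪g x, zs - x⟫ ≤ 0)
    (L δ : ℝ) (hL : 0 < L)
    (z w zp : E) (hwX : w ∈ X) (hzpX : zp ∈ X)
    (hwmin : ∀ y ∈ X,
      (1 / L) * ⟪g z, w⟫ + V w z ≤ (1 / L) * ⟪g z, y⟫ + V y z)
    (hzpmin : ∀ u ∈ X,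
      (1 / L) * ⟪g w, zp⟫ + V zp z + (μ / L) * V zp w ≤
        (1 / L) * ⟪g w, u⟫ + V u z + (μ / L) * V u w)
    (hls : ⟪g z - g w, zp - w⟫ ≤ L * (V w z + V zp w) + δ) :
    V zs zp ≤ (1 + μ / L)⁻¹ * V zs z + δ / (L + μ) := by
  obtain rfl : V = bregmanDiv d Dd := funext₂ hV
  have hw_opt := IsMinOn.bregmanDiv_prox_optimality (p := (1 / L) • g z) (b := z) (c := 0)
    (isMinOn_iff.2 fun y hy => by simpa [real_inner_smul_left] using hwmin y hy)
    hXconv hwX hzpX (hd w)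
  have hzp_opt := IsMinOn.bregmanDiv_prox_optimality (p := (1 / L) • g w) (c := μ / L)
    (isMinOn_iff.2 fun u hu => by simpa [real_inner_smul_left] using hzpmin u hu)
    hXconv hzpX hzs (hd zp)
  have hminty := mul_bregmanDiv_le_inner_of_minty hdconv hd hμ.le hXconv hmono hzs hMinty hwX
  have hVzpw := mul_nonneg hμ.le (bregmanDiv_nonneg hdconv (hd w) zp)
  rw [real_inner_smul_left] at hw_opt hzp_opt
  have key : (L + μ) * bregmanDiv d Dd zs zp ≤ L * bregmanDiv d Dd zs z + δ := by
    have hw' := mul_nonneg hL.le hw_opt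
    have hzp' := mul_nonneg hL.le hzp_opt
    field_simp at hw' hzp'
    simp only [inner_sub_left, inner_sub_right] at hw' hzp' hminty hls
    linarith
  rw [show (1 + μ / L)⁻¹ = L / (L + μ) by field_simp, div_mul_eq_mul_div, ← add_div,
    le_div_iff₀ (by positivity)]
  linarith

/-- One-step contraction of Algorithm 3 (proof of Theorem 3): single iteration
with line-search slack δ. -/
theorem algorithm3_one_step_contraction
    {E : Type*} [NormedAddCommGroup E] [InnerProductSpace ℝ E] [CompleteSpace E]
    (X : Set E) (hXne : X.Nonempty) (hXconv : Convex ℝ X)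
    (d : E → ℝ) (hdconv : ConvexOn ℝ Set.univ d)
    (Dd : E → E) (hd : ∀ x, HasGradientAt d (Dd x) x)
    (V : E → E → ℝ) (hV : ∀ y x, V y x = d y - d x - ⟪Dd x, y - x⟫)
    (μ : ℝ) (hμ : 0 < μ) (g : E → E)
    (hmono : ∀ x ∈ X, ∀ y ∈ X, μ * (V y x + V x y) ≤ ⟪g y - g x, y - x⟫)
    (zs : E) (hzs : zs ∈ X) (hMinty : ∀ x ∈ X, ⟪g x, zs - x⟫ ≤ 0)
    (L δ : ℝ) (hL : 0 < L) (hδ : 0 ≤ δ)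
    (z w zp : E) (hzX : z ∈ X) (hwX : w ∈ X) (hzpX : zp ∈ X)
    (hwmin : ∀ y ∈ X,
      (1 / L) * ⟪g z, w⟫ + V w z ≤ (1 / L) * ⟪g z, y⟫ + V y z)
    (hzpmin : ∀ u ∈ X,
      (1 / L) * ⟪g w, zp⟫ + V zp z + (μ / L) * V zp w ≤
        (1 / L) * ⟪g w, u⟫ + V u z + (μ / L) * V u w)
    (hls : ⟪g z - g w, zp - w⟫ ≤ L * (V w z + V zp w) + δ) :
    V zs zp ≤ (1 + μ / L)⁻¹ * V zs z + δ / (L + μ) :=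
  algorithm3_one_step_contraction_general X hXconv d hdconv Dd hd V hV μ hμ g hmono zs hzs hMinty L
    δ hL z w zp hwX hzpX hwmin hzpmin hls
end

section
/- Let E be a real inner product space, X ⊆ E a nonempty convex set, d : E → ℝ a convex Fréchet-differentiable function with Bregman divergence V(y,x) := d(y) − d(x) − ⟨∇d(x), y − x⟩, μ > 0, and g : E → E a μ-relatively strongly monotone operator on X with z* ∈ X a solution of the Minty variational inequality. Let L > 0, δ ≥ 0, and z, w, z⁺ ∈ X be such that: (i) w minimizes y ↦ ⟨(1/L)·g(z), y⟩ + V(y, z) over X; (ii) z⁺ minimizes u ↦ ⟨(1/L)·g(w), u⟩ + V(u, z) + (μ/L)·V(u, w) over X; (iii) ⟨g(z) − g(w), z⁺ − w⟩ ≤ L·( V(w, z) + V(z⁺, w) ) + L·δ. Then V(z*, z⁺) ≤ (1 + μ/L)^{−1}·V(z*, z) + L·δ/(L + μ); in particular V(z*, z⁺) ≤ (1 + μ/L)^{−1}·V(z*, z) + δ. -/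
/-!
The optimality conditions of the two prox steps, rewritten with the three-point identity
`V(u,x) - V(u,a) - V(a,x) = ⟪∇d a - ∇d x, u - a⟫`, give
`0 ≤ ⟪g z, z⁺ - w⟫ + L (V(z⁺,z) - V(z⁺,w) - V(w,z))` and
`0 ≤ ⟪g w, z* - z⁺⟫ + L (V(z*,z) - V(z*,z⁺) - V(z⁺,z)) + μ (V(z*,w) - V(z*,z⁺) - V(z⁺,w))`.
Since `z*` is only a Minty solution, relative strong monotonicity is applied between `w` and the
points of the segment `[z*, w]` and then `μ V(z*,w) ≤ ⟪g w, w - z*⟫` follows by letting these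
points tend to `z*`. Adding the three inequalities to the line-search condition, the inner products
cancel and `(L + μ) V(z*,z⁺) ≤ L V(z*,z) + L δ` remains.
-/

open scoped RealInnerProductSpace
open Set AffineMap

section

variable {E : Type*} [NormedAddCommGroup E] [InnerProductSpace ℝ E]

def bregman (d : E → ℝ) (Dd : E → E) (y x : E) : ℝ := d y - d x - ⟪Dd x, y - x⟫

def RelStronglyMonotoneOn (μ : ℝ) (V : E → E → ℝ) (g : E → E) (X : Set E) : Prop :=
  ∀ x ∈ X, ∀ y ∈ X, μ * (V y x + V x y) ≤ ⟪g y - g x, y - x⟫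

def IsMintySolution (g : E → E) (X : Set E) (z : E) : Prop :=
  ∀ x ∈ X, ⟪g x, z - x⟫ ≤ 0

theorem bregman_three_point (d : E → ℝ) (Dd : E → E) (u x a : E) :
    bregman d Dd u x - bregman d Dd u a - bregman d Dd a x = ⟪Dd a - Dd x, u - a⟫ := by
  simp only [bregman, inner_sub_left, inner_sub_right]
  ring

theorem continuous_bregman_left {d : E → ℝ} (hd : Continuous d) (Dd : E → E) (x : E) :
    Continuous fun y => bregman d Dd y x := by
  unfold bregman
  fun_prop

section Gradient

variable [CompleteSpace E] {d : E → ℝ} {Dd : E → E}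

theorem hasFDerivAt_bregman_left (hd : ∀ x, HasGradientAt d (Dd x) x) (x y : E) :
    HasFDerivAt (fun u => bregman d Dd u x) (innerSL ℝ (Dd y - Dd x)) y := by
  have h : HasFDerivAt (fun u => d u - d x - (⟪Dd x, u⟫ - ⟪Dd x, x⟫))
      (InnerProductSpace.toDual ℝ E (Dd y) - innerSL ℝ (Dd x)) y :=
    ((hd y).hasFDerivAt.sub_const (d x)).sub ((innerSL ℝ (Dd x)).hasFDerivAt.sub_const _)
  refine (h.congr_fderiv ?_).congr_of_eventuallyEq (Filter.Eventually.of_forall fun u => ?_)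
  · ext v
    simp
  · simp [bregman, inner_sub_right]

theorem bregman_nonneg (hconv : ConvexOn ℝ univ d) (hd : ∀ x, HasGradientAt d (Dd x) x)
    (y x : E) : 0 ≤ bregman d Dd y x := by
  have hline : ConvexOn ℝ univ (d ∘ lineMap x y) := hconv.comp_affineMap (lineMap x y)
  have hderiv : HasDerivAt (d ∘ lineMap x y) ⟪Dd x, y - x⟫ (0 : ℝ) := by
    simpa using (hd x).hasFDerivAt.comp_hasDerivAt_of_eq (x := (0 : ℝ)) hasDerivAt_lineMap (by simp)
  have h := hline.le_slope_of_hasDerivAt trivial trivial zero_lt_one hderiv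
  simpa [slope_def_field, bregman] using h

theorem IsMinOn.bregman_prox_optimality {X : Set E} (hX : Convex ℝ X)
    (hd : ∀ x, HasGradientAt d (Dd x) x) {L ν : ℝ} (hL : 0 < L) {c x x' a u : E}
    (hmin : IsMinOn (fun y => (1 / L) * ⟪c, y⟫ + bregman d Dd y x + (ν / L) * bregman d Dd y x')
      X a) (ha : a ∈ X) (hu : u ∈ X) :
    0 ≤ ⟪c, u - a⟫ + L * (bregman d Dd u x - bregman d Dd u a - bregman d Dd a x)
      + ν * (bregman d Dd u x' - bregman d Dd u a - bregman d Dd a x') := by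
  have hf := (((innerSL ℝ c).hasFDerivAt.const_mul (1 / L)).add
    (hasFDerivAt_bregman_left hd x a)).add ((hasFDerivAt_bregman_left hd x' a).const_mul (ν / L))
  have h := hmin.localize.hasFDerivWithinAt_nonneg hf.hasFDerivWithinAt
    (sub_mem_posTangentConeAt_of_segment_subset (hX.segment_subset ha hu))
  simp only [add_apply, smul_apply, innerSL_apply_apply, smul_eq_mul] at h
  rw [bregman_three_point, bregman_three_point]
  calc 0 ≤ L * _ := mul_nonneg hL.le h
    _ = _ := by field_simp

end Gradient

theorem RelStronglyMonotoneOn.mul_le_inner_of_isMintySolution {X : Set E} (hX : Convex ℝ X)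
    {μ : ℝ} (hμ : 0 ≤ μ) {V : E → E → ℝ} (hV : ∀ x y, 0 ≤ V x y) {g : E → E}
    (hmono : RelStronglyMonotoneOn μ V g X) {zs w : E} (hzs : zs ∈ X) (hw : w ∈ X)
    (hMinty : IsMintySolution g X zs) (hVw : Continuous fun y => V y w) :
    μ * V zs w ≤ ⟪g w, w - zs⟫ := by
  have hsegment : ∀ t ∈ Ioc (0 : ℝ) 1, μ * V (lineMap zs w t) w ≤ (1 - t) * ⟪g w, w - zs⟫ := by
    intro t ⟨ht0, ht1⟩
    have hxt : lineMap zs w t ∈ X := hX.lineMap_mem hzs hw ⟨ht0.le, ht1⟩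
    have hMt := hMinty _ hxt
    have hmt := hmono _ hxt _ hw
    rw [← vsub_eq_sub, left_vsub_lineMap, vsub_eq_sub, ← neg_sub w zs, smul_neg, inner_neg_right,
      real_inner_smul_right, neg_nonpos] at hMt
    rw [← vsub_eq_sub w, right_vsub_lineMap, vsub_eq_sub, real_inner_smul_right, inner_sub_left]
      at hmt
    have hgt : 0 ≤ ⟪g (lineMap zs w t), w - zs⟫ := nonneg_of_mul_nonneg_right hMt ht0
    linarith [mul_nonneg hμ (hV w (lineMap zs w t)), mul_nonneg (sub_nonneg.2 ht1) hgt]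
  have hcont : Continuous fun t : ℝ => μ * V (lineMap zs w t) w - (1 - t) * ⟪g w, w - zs⟫ := by
    fun_prop
  have h : μ * V (lineMap zs w (0 : ℝ)) w - (1 - 0) * ⟪g w, w - zs⟫ ≤ 0 := by
    refine le_of_tendsto ((hcont.tendsto 0).mono_left (nhdsWithin_le_nhds (s := Ioi 0))) ?_
    filter_upwards [Ioc_mem_nhdsGT zero_lt_one] with t ht
    exact sub_nonpos.2 (hsegment t ht)
  simpa [sub_nonpos] using h

end

theorem algorithm5_one_step_contraction_general
    {E : Type*} [NormedAddCommGroup E] [InnerProductSpace ℝ E] [CompleteSpace E]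
    (X : Set E) (hXconv : Convex ℝ X)
    (d : E → ℝ) (hdconv : ConvexOn ℝ Set.univ d)
    (Dd : E → E) (hd : ∀ x, HasGradientAt d (Dd x) x)
    (V : E → E → ℝ) (hV : ∀ y x, V y x = d y - d x - ⟪Dd x, y - x⟫)
    (μ : ℝ) (hμ : 0 < μ) (g : E → E)
    (hmono : ∀ x ∈ X, ∀ y ∈ X, μ * (V y x + V x y) ≤ ⟪g y - g x, y - x⟫)
    (zs : E) (hzs : zs ∈ X) (hMinty : ∀ x ∈ X, ⟪g x, zs - x⟫ ≤ 0)
    (L δ : ℝ) (hL : 0 < L) (hδ : 0 ≤ δ)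
    (z w zp : E) (hwX : w ∈ X) (hzpX : zp ∈ X)
    (hwmin : ∀ y ∈ X,
      (1 / L) * ⟪g z, w⟫ + V w z ≤ (1 / L) * ⟪g z, y⟫ + V y z)
    (hzpmin : ∀ u ∈ X,
      (1 / L) * ⟪g w, zp⟫ + V zp z + (μ / L) * V zp w ≤
        (1 / L) * ⟪g w, u⟫ + V u z + (μ / L) * V u w)
    (hls : ⟪g z - g w, zp - w⟫ ≤ L * (V w z + V zp w) + L * δ) :
    V zs zp ≤ (1 + μ / L)⁻¹ * V zs z + L * δ / (L + μ) ∧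
      V zs zp ≤ (1 + μ / L)⁻¹ * V zs z + δ := by
  obtain rfl : V = bregman d Dd := funext₂ hV
  have hV0 := bregman_nonneg hdconv hd
  have hw_opt := IsMinOn.bregman_prox_optimality (ν := 0) (x' := w) hXconv hd hL
    (fun y hy => by simpa using hwmin y hy) hwX hzpX
  have hzp_opt := IsMinOn.bregman_prox_optimality hXconv hd hL hzpmin hzpX hzs
  have hdcont : Continuous d := continuous_iff_continuousAt.2 fun x => (hd x).continuousAt
  have hzs_w := RelStronglyMonotoneOn.mul_le_inner_of_isMintySolution hXconv hμ.le hV0 hmono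
    hzs hwX hMinty (continuous_bregman_left hdcont Dd w)
  have htelescope : ⟪g z, zp - w⟫ + ⟪g w, zs - zp⟫ + ⟪g w, w - zs⟫ = ⟪g z - g w, zp - w⟫ := by
    simp only [inner_sub_left, inner_sub_right]
    ring
  have hLμ : 0 < L + μ := by linarith
  have hcontract : (L + μ) * bregman d Dd zs zp ≤ L * bregman d Dd zs z + L * δ := by
    linarith [mul_nonneg hμ.le (hV0 zp w)]
  have hbound : bregman d Dd zs zp ≤ (1 + μ / L)⁻¹ * bregman d Dd zs z + L * δ / (L + μ) := by
    rw [show (1 + μ / L)⁻¹ = L / (L + μ) by field_simp, div_mul_eq_mul_div, ← add_div,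
      le_div_iff₀ hLμ]
    linarith
  have hslack : L * δ / (L + μ) ≤ δ := by
    rw [div_le_iff₀ hLμ]
    nlinarith [mul_nonneg hδ hμ.le]
  exact ⟨hbound, by linarith⟩

/-- One-step contraction of Algorithm 5 (proof of Theorem 4): single iteration
with line-search slack L·δ. -/
theorem algorithm5_one_step_contraction
    {E : Type*} [NormedAddCommGroup E] [InnerProductSpace ℝ E] [CompleteSpace E]
    (X : Set E) (hXne : X.Nonempty) (hXconv : Convex ℝ X)
    (d : E → ℝ) (hdconv : ConvexOn ℝ Set.univ d)
    (Dd : E → E) (hd : ∀ x, HasGradientAt d (Dd x) x)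
    (V : E → E → ℝ) (hV : ∀ y x, V y x = d y - d x - ⟪Dd x, y - x⟫)
    (μ : ℝ) (hμ : 0 < μ) (g : E → E)
    (hmono : ∀ x ∈ X, ∀ y ∈ X, μ * (V y x + V x y) ≤ ⟪g y - g x, y - x⟫)
    (zs : E) (hzs : zs ∈ X) (hMinty : ∀ x ∈ X, ⟪g x, zs - x⟫ ≤ 0)
    (L δ : ℝ) (hL : 0 < L) (hδ : 0 ≤ δ)
    (z w zp : E) (hzX : z ∈ X) (hwX : w ∈ X) (hzpX : zp ∈ X)
    (hwmin : ∀ y ∈ X,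
      (1 / L) * ⟪g z, w⟫ + V w z ≤ (1 / L) * ⟪g z, y⟫ + V y z)
    (hzpmin : ∀ u ∈ X,
      (1 / L) * ⟪g w, zp⟫ + V zp z + (μ / L) * V zp w ≤
        (1 / L) * ⟪g w, u⟫ + V u z + (μ / L) * V u w)
    (hls : ⟪g z - g w, zp - w⟫ ≤ L * (V w z + V zp w) + L * δ) :
    V zs zp ≤ (1 + μ / L)⁻¹ * V zs z + L * δ / (L + μ) ∧
      V zs zp ≤ (1 + μ / L)⁻¹ * V zs z + δ :=
  algorithm5_one_step_contraction_general X hXconv d hdconv Dd hd V hV μ hμ g hmono zs hzs hMinty L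
    δ hL hδ z w zp hwX hzpX hwmin hzpmin hls
end
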